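/- Linear-region bound with explicit constant: for 0 < r ≤ 1, 0 < ε < e^{-r}, if ε ≤ x < y ≤ 1 and d = y − x, then d·(κ(y) − κ(x)) ≤ C·d²·(ln(1/d²))^r where κ is the linearly-extended modulus κ^{ε,r}, and C = max{1, (ln(1/ε)/(2·ln(1/(1−ε))))^r}. -/
import Mathlib


noncomputable def kappaExt (ε r x : ℝ) : ℝ :=
  if x ≤ ε then x * (Real.log (1 / x)) ^ r
  else ε * (Real.log (1 / ε)) ^ r +
    (Real.log (1 / ε)) ^ r * (1 - r / Real.log (1 / ε)) * (x - ε)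

theorem linear_region_bound (r ε x y : ℝ) (hr0 : 0 < r) (hr1 : r ≤ 1)
    (hε0 : 0 < ε) (hε : ε < Real.exp (-r))
    (hx : ε ≤ x) (hxy : x < y) (hy : y ≤ 1) :
    (y - x) * (kappaExt ε r y - kappaExt ε r x) ≤
      max 1 ((Real.log (1 / ε) / (2 * Real.log (1 / (1 - ε)))) ^ r) *
        (y - x) ^ 2 * (Real.log (1 / (y - x) ^ 2)) ^ r := by
  set L := Real.log (1 / ε) with hL
  have hε1 : ε < 1 := lt_trans hε (by
    have : Real.exp (-r) < Real.exp 0 := Real.exp_lt_exp.mpr (by linarith)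
    simpa using this)
  have hLr : r < L := by
    have h := Real.log_lt_log hε0 hε
    rw [Real.log_exp] at h
    rw [hL, one_div, Real.log_inv]
    linarith
  have hL0 : 0 < L := hr0.trans hLr
  set s := L ^ r * (1 - r / L) with hs
  have hyε : ε < y := lt_of_le_of_lt hx hxy
  have hky : kappaExt ε r y = ε * L ^ r + s * (y - ε) := by
    rw [kappaExt, if_neg (not_le.mpr hyε)]
  have hkx : kappaExt ε r x = ε * L ^ r + s * (x - ε) := by
    rcases eq_or_lt_of_le hx with h | h
    · rw [kappaExt, if_pos h.symm.le, ← h]; ring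
    · rw [kappaExt, if_neg (not_le.mpr h)]
  have hdiff : kappaExt ε r y - kappaExt ε r x = s * (y - x) := by
    rw [hky, hkx]; ring
  set d := y - x with hd
  have hd0 : 0 < d := by simp [hd]; linarith
  have hdle : d ≤ 1 - ε := by simp [hd]; linarith
  set B := Real.log (1 / d ^ 2) with hB
  set B0 := Real.log (1 / (1 - ε)) with hB0
  have hB00 : 0 < B0 := by
    rw [hB0]
    apply Real.log_pos
    rw [lt_div_iff₀ (by linarith)]
    linarith
  have hB2 : 2 * B0 ≤ B := by
    have h1 : (1:ℝ) / d ^ 2 = (1 / d) ^ 2 := by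
      field_simp
    rw [hB, h1, hB0]
    have h2 : Real.log ((1 / d) ^ 2) = 2 * Real.log (1 / d) := by
      rw [show ((1:ℝ)/d)^2 = (1/d)^(2:ℕ) from rfl, Real.log_pow]
      push_cast; ring
    rw [h2]
    have h3 : 1 / (1 - ε) ≤ 1 / d := by
      apply div_le_div_of_nonneg_left (by norm_num) hd0 hdle
    have := Real.log_le_log (one_div_pos.mpr (by linarith)) h3
    linarith
  have hBpos : 0 < B := by linarith
  have hsL : s ≤ L ^ r := by
    rw [hs]
    have h1 : 1 - r / L ≤ 1 := by
      have : 0 < r / L := by positivity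
      linarith
    have h2 : 0 < L ^ r := Real.rpow_pos_of_pos hL0 r
    nlinarith
  set C := max 1 ((L / (2 * B0)) ^ r) with hC
  have hkey : L ^ r ≤ C * B ^ r := by
    have hdiv : L / B ≤ L / (2 * B0) := by
      apply div_le_div_of_nonneg_left hL0.le (by linarith) hB2
    have h1 : (L / B) ^ r ≤ (L / (2 * B0)) ^ r :=
      Real.rpow_le_rpow (by positivity) hdiv hr0.le
    have h2 : (L / B) ^ r * B ^ r = L ^ r := by
      rw [← Real.mul_rpow (by positivity) hBpos.le, div_mul_cancel₀ _ hBpos.ne']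
    calc L ^ r = (L / B) ^ r * B ^ r := h2.symm
      _ ≤ (L / (2 * B0)) ^ r * B ^ r := by
          apply mul_le_mul_of_nonneg_right h1 (Real.rpow_nonneg hBpos.le r)
      _ ≤ C * B ^ r := by
          apply mul_le_mul_of_nonneg_right (le_max_right _ _)
            (Real.rpow_nonneg hBpos.le r)
  have hsC : s ≤ C * B ^ r := hsL.trans hkey
  calc d * (kappaExt ε r y - kappaExt ε r x) = s * d ^ 2 := by
        rw [hdiff]; ring
    _ ≤ (C * B ^ r) * d ^ 2 := mul_le_mul_of_nonneg_right hsC (sq_nonneg d)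
    _ = C * d ^ 2 * B ^ r := by ring
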